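/- arXiv:math/0607673 — 3 statements merged into one kernel-verified Lean document; each statement's English description precedes it below -/
import Mathlib

section
/- For involutions σ and σ' of {1,…,n}, let M be the entrywise minimum of R_σ and R_{σ'}. Then the following are equivalent: (1) the set {τ : τ an involution with R_τ ⪯ M} has a maximum element with respect to ⪯, i.e. there is an involution δ with R_δ ⪯ M such that every involution τ with R_τ ⪯ M satisfies R_τ ⪯ R_δ; (2) there exists an involution η with R_η = M. -/
open Matrix

/-- A matrix is strictly upper-triangular. -/
def StrictUpper {n : ℕ} (x : Matrix (Fin n) (Fin n) ℂ) : Prop :=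
  ∀ a b : Fin n, b ≤ a → x a b = 0

/-- A matrix is (weakly) upper-triangular. -/
def UpperTri {n : ℕ} (x : Matrix (Fin n) (Fin n) ℂ) : Prop :=
  ∀ a b : Fin n, b < a → x a b = 0

/-- The orbit of a matrix under conjugation by invertible upper-triangular matrices. -/
def Borbit {n : ℕ} (x : Matrix (Fin n) (Fin n) ℂ) : Set (Matrix (Fin n) (Fin n) ℂ) :=
  {y | ∃ b : Matrix (Fin n) (Fin n) ℂ, IsUnit b ∧ UpperTri b ∧ y = b * x * b⁻¹}

/-- A permutation is an involution. -/
def IsInvol {n : ℕ} (σ : Equiv.Perm (Fin n)) : Prop := σ * σ = 1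

/-- The strictly upper-triangular part `N_σ` of the permutation matrix of `σ`. -/
def Nmat {n : ℕ} (σ : Equiv.Perm (Fin n)) : Matrix (Fin n) (Fin n) ℂ :=
  Matrix.of fun a b => if a < b ∧ σ a = b then (1 : ℂ) else 0

/-- The submatrix `π_{i,j}(x)` on rows and columns `i,…,j` (1-based), for `1 ≤ i ≤ j ≤ n`. -/
def blk {n : ℕ} (x : Matrix (Fin n) (Fin n) ℂ) (i j : ℕ)
    (h1 : 1 ≤ i) (h2 : i ≤ j) (h3 : j ≤ n) :
    Matrix (Fin (j + 1 - i)) (Fin (j + 1 - i)) ℂ :=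
  Matrix.of fun a b =>
    x ⟨i - 1 + a.1, by have := a.2; omega⟩ ⟨i - 1 + b.1, by have := b.2; omega⟩

/-- The rank matrix of `N_σ` (1-based indices, 0 outside the range `1 ≤ i < j ≤ n`). -/
noncomputable def Rfun {n : ℕ} (σ : Equiv.Perm (Fin n)) : ℕ → ℕ → ℕ := fun i j =>
  if h : 1 ≤ i ∧ i < j ∧ j ≤ n then (blk (Nmat σ) i j h.1 h.2.1.le h.2.2).rank
  else 0

/-- The number of two-cycles of an involution. -/
def numCycles {n : ℕ} (σ : Equiv.Perm (Fin n)) : ℕ :=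
  (Finset.univ.filter fun a : Fin n => a < σ a).card

/-- Evaluation of a polynomial in the matrix entries at a matrix. -/
noncomputable def evalMat {n : ℕ} (x : Matrix (Fin n) (Fin n) ℂ)
    (f : MvPolynomial (Fin n × Fin n) ℂ) : ℂ :=
  MvPolynomial.eval (fun p => x p.1 p.2) f

/-- The vanishing ideal of a set of matrices. -/
noncomputable def vanishingIdeal {n : ℕ} (S : Set (Matrix (Fin n) (Fin n) ℂ)) :
    Ideal (MvPolynomial (Fin n × Fin n) ℂ) where
  carrier := {f | ∀ x ∈ S, evalMat x f = 0}
  add_mem' := by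
    intro a b ha hb x hx
    simp only [evalMat, map_add] at *
    rw [ha x hx, hb x hx, add_zero]
  zero_mem' := by
    intro x hx
    simp [evalMat]
  smul_mem' := by
    intro c f hf x hx
    simp only [evalMat, smul_eq_mul, _root_.map_mul] at *
    rw [hf x hx, mul_zero]

/-- The Zariski closure of a set of matrices: the common zero set of its vanishing ideal. -/
noncomputable def zclosure {n : ℕ} (S : Set (Matrix (Fin n) (Fin n) ℂ)) :
    Set (Matrix (Fin n) (Fin n) ℂ) :=
  {x | ∀ f ∈ vanishingIdeal S, evalMat x f = 0}

/-- The space of upper-triangular matrices commuting with a given matrix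
(the Lie algebra of the stabilizer of `N` in `B`). -/
noncomputable def commUT {n : ℕ} (N : Matrix (Fin n) (Fin n) ℂ) :
    Submodule ℂ (Matrix (Fin n) (Fin n) ℂ) where
  carrier := {z | UpperTri z ∧ z * N = N * z}
  add_mem' := by
    rintro a b ⟨ha1, ha2⟩ ⟨hb1, hb2⟩
    refine ⟨fun p q h => ?_, by rw [add_mul, mul_add, ha2, hb2]⟩
    simp [Matrix.add_apply, ha1 p q h, hb1 p q h]
  zero_mem' := ⟨fun p q h => rfl, by simp⟩
  smul_mem' := by
    rintro c a ⟨ha1, ha2⟩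
    refine ⟨fun p q h => ?_, by rw [Matrix.smul_mul, Matrix.mul_smul, ha2]⟩
    simp [Matrix.smul_apply, ha1 p q h]

/-! The rank of the window `π_{i,j}(N_σ)` is the number of arcs `x < σ x` of `σ` inside
`[i, j]`. Fix a window and let `m = min(R_σ(i,j), R_σ'(i,j))`; an involution has at most
`(j - i + 1) / 2` arcs there, so the `m` mutually crossing arcs `i + t ↔ j - m + 1 + t`
(`t < m`) fit into it. Shrinking the window by `k` positions removes at most `k` arcs of any
permutation but at least `k` of these crossing arcs, so this crossing involution `τ` satisfies
`R_τ ⪯ min(R_σ, R_σ')` and `R_τ(i,j) = m`. Hence a maximum `δ` has `R_δ(i,j) ≥ m` in every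
window, which is `R_δ = min(R_σ, R_σ')`. -/

theorem Matrix.rank_of_partialBijection {m n K : Type*} [Fintype m] [Fintype n] [DecidableEq m]
    [Field K] (R : m → n → Prop) [∀ a b, Decidable (R a b)] (M : Matrix m n K)
    (hM : ∀ a b, M a b = if R a b then 1 else 0)
    (hfun : ∀ a b b', R a b → R a b' → b = b') (hinj : ∀ a a' b, R a b → R a' b → a = a') :
    M.rank = Fintype.card {a // ∃ b, R a b} := by
  classical
  set D : Matrix m m K := diagonal fun a => if ∃ b, R a b then 1 else 0
  have hDM : D * M = M := by
    ext a b
    by_cases hab : R a b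
    · simp [D, hM, hab, show ∃ b, R a b from ⟨b, hab⟩]
    · simp [D, hM, hab]
  have hMMt : M * Mᵀ = D := by
    ext a a'
    simp only [mul_apply, transpose_apply, D, diagonal_apply]
    by_cases ha : ∃ b, R a b
    · obtain ⟨b, hab⟩ := ha
      rw [Finset.sum_eq_single b
        (fun b' _ hb' => by simp [hM, hfun a b b' hab |>.mt (Ne.symm hb')]) (by simp)]
      by_cases hb : R a' b
      · simp [hM, hb, hinj a a' b hab hb, show ∃ b, R a' b from ⟨b, hb⟩]
      · simp [hM, hb, show a ≠ a' from fun h => hb (h ▸ hab)]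
    · push Not at ha
      simp [hM, ha]
  have hle : M.rank ≤ D.rank := hDM ▸ rank_mul_le_left D M
  have hge : D.rank ≤ M.rank := hMMt ▸ rank_mul_le_left M Mᵀ
  rw [le_antisymm hle hge, rank_diagonal]
  exact Fintype.card_congr (Equiv.subtypeEquivRight fun a => by simp)

section Arcs

variable {n : ℕ}

/-- Windows are 0-based and half-open, so `Rfun σ i j` counts `arcs σ (i - 1) j`. -/
def arcs (σ : Equiv.Perm (Fin n)) (a b : ℕ) : Finset (Fin n) :=
  {x | a ≤ (x : ℕ) ∧ (x : ℕ) < σ x ∧ (σ x : ℕ) < b}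

@[simp]
lemma mem_arcs {σ : Equiv.Perm (Fin n)} {a b : ℕ} {x : Fin n} :
    x ∈ arcs σ a b ↔ a ≤ (x : ℕ) ∧ (x : ℕ) < σ x ∧ (σ x : ℕ) < b := by
  simp [arcs]

lemma Rfun_eq_card_arcs (σ : Equiv.Perm (Fin n)) {i j : ℕ} (hi : 1 ≤ i) (hij : i < j)
    (hj : j ≤ n) : Rfun σ i j = (arcs σ (i - 1) j).card := by
  let emb : Fin (j + 1 - i) → Fin n := fun a => ⟨i - 1 + a, by omega⟩
  have hemb : Function.Injective emb := fun a a' h => Fin.ext (by simpa [emb] using h)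
  rw [Rfun, dif_pos ⟨hi, hij, hj⟩,
    Matrix.rank_of_partialBijection (fun a b => emb a < emb b ∧ σ (emb a) = emb b)
      (blk (Nmat σ) i j hi hij.le hj) (fun _ _ => rfl)
      (fun a b b' hb hb' => hemb (hb.2.symm.trans hb'.2))
      (fun a a' b ha ha' => hemb (σ.injective (ha.2.trans ha'.2.symm))),
    Fintype.card_subtype]
  refine Finset.card_bij (fun a _ => emb a) ?_ (fun a _ a' _ h => hemb h) ?_
  · intro a ha
    obtain ⟨b, hab, hσ⟩ := (Finset.mem_filter.mp ha).2
    have hb := b.2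
    simp only [emb, Fin.lt_def, Fin.ext_iff] at hab hσ
    simp only [mem_arcs, emb, hσ]
    omega
  · intro x hx
    rw [mem_arcs] at hx
    have hx' : emb ⟨x - (i - 1), by omega⟩ = x := Fin.ext (by simp only [emb]; omega)
    have hσx : emb ⟨σ x - (i - 1), by omega⟩ = σ x := Fin.ext (by simp only [emb]; omega)
    refine ⟨⟨x - (i - 1), by omega⟩,
      Finset.mem_filter.mpr ⟨Finset.mem_univ _, ⟨σ x - (i - 1), by omega⟩, ?_, by rw [hx', hσx]⟩,
      hx'⟩
    rw [hx', hσx, Fin.lt_def]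
    exact hx.2.1

lemma Rfun_eq_zero {σ : Equiv.Perm (Fin n)} {i j : ℕ}
    (h : ¬(1 ≤ i ∧ i < j ∧ j ≤ n)) : Rfun σ i j = 0 :=
  dif_neg h

lemma Rfun_le_Rfun_of_card_arcs_le {σ τ : Equiv.Perm (Fin n)}
    (h : ∀ a b, (arcs τ a b).card ≤ (arcs σ a b).card) (i j : ℕ) :
    Rfun τ i j ≤ Rfun σ i j := by
  by_cases hr : 1 ≤ i ∧ i < j ∧ j ≤ n
  · rw [Rfun_eq_card_arcs τ hr.1 hr.2.1 hr.2.2, Rfun_eq_card_arcs σ hr.1 hr.2.1 hr.2.2]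
    exact h _ _
  · simp [Rfun_eq_zero hr]

lemma Finset.card_le_sub_of_injOn_Ico {α : Type*} {s : Finset α} {f : α → ℕ} {c d : ℕ}
    (hf : ∀ x ∈ s, c ≤ f x ∧ f x < d) (hinj : Set.InjOn f s) : s.card ≤ d - c := by
  simpa using Finset.card_le_card_of_injOn f (t := Finset.Ico c d)
    (fun x hx => by simpa using hf x hx) hinj

/-- An arc of `σ` in `[a, b)` that is not an arc in `[c, d)` starts in `[a, c)` or ends in
`[d, b)`; there are at most `c - a` of the former and `b - d` of the latter. -/
lemma card_arcs_le_card_arcs_add (σ : Equiv.Perm (Fin n)) (a b c d : ℕ) :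
    (arcs σ a b).card ≤ (arcs σ c d).card + (c - a) + (b - d) := by
  classical
  let X₁ : Finset (Fin n) := {x | a ≤ (x : ℕ) ∧ (x : ℕ) < c}
  let X₂ : Finset (Fin n) := {x | d ≤ (σ x : ℕ) ∧ (σ x : ℕ) < b}
  have hsub : arcs σ a b ⊆ arcs σ c d ∪ X₁ ∪ X₂ := by
    intro x hx
    simp only [mem_arcs, Finset.mem_union, Finset.mem_filter, Finset.mem_univ, true_and, X₁,
      X₂] at hx ⊢
    omega
  have h₁ : X₁.card ≤ c - a :=
    Finset.card_le_sub_of_injOn_Ico (by simp [X₁]) Fin.val_injective.injOn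
  have h₂ : X₂.card ≤ b - d :=
    Finset.card_le_sub_of_injOn_Ico (f := fun x => σ x) (by simp [X₂])
      (Fin.val_injective.comp σ.injective).injOn
  calc (arcs σ a b).card ≤ (arcs σ c d ∪ X₁ ∪ X₂).card := Finset.card_le_card hsub
    _ ≤ (arcs σ c d).card + X₁.card + X₂.card :=
      (Finset.card_union_le _ _).trans (by gcongr; exact Finset.card_union_le _ _)
    _ ≤ _ := by omega

/-- The arcs of an involution and their endpoints `σ x` are disjoint sets of positions. -/
lemma two_mul_card_arcs_le {σ : Equiv.Perm (Fin n)} (hσ : IsInvol σ) (a b : ℕ) :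
    2 * (arcs σ a b).card ≤ b - a := by
  classical
  have hσσ : ∀ x, σ (σ x) = x := fun x => congrArg (· x) hσ
  have hdisj : Disjoint (arcs σ a b) ((arcs σ a b).image σ) := by
    refine Finset.disjoint_left.mpr fun x hx hx' => ?_
    obtain ⟨y, hy, rfl⟩ := Finset.mem_image.mp hx'
    rw [mem_arcs, hσσ] at hx
    rw [mem_arcs] at hy
    omega
  have hwin : ((arcs σ a b) ∪ (arcs σ a b).image σ).card ≤ b - a :=
    calc _ ≤ ({x | a ≤ (x : ℕ) ∧ (x : ℕ) < b} : Finset (Fin n)).card := by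
          refine Finset.card_le_card fun x hx => ?_
          simp only [Finset.mem_union, Finset.mem_image, mem_arcs, Finset.mem_filter,
            Finset.mem_univ, true_and] at hx ⊢
          rcases hx with hx | ⟨y, hy, rfl⟩ <;> omega
      _ ≤ b - a := Finset.card_le_sub_of_injOn_Ico (by simp) Fin.val_injective.injOn
  rw [Finset.card_union_of_disjoint hdisj, Finset.card_image_of_injective _ σ.injective] at hwin
  omega

/-- The position matched to `v` when `a + t` is paired with `b - m + t` for every `t < m`. -/
def crossIndex (a b m v : ℕ) : ℕ :=
  if a ≤ v ∧ v < a + m then v + (b - a - m)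
  else if b - m ≤ v ∧ v < b then v - (b - a - m)
  else v

lemma crossIndex_crossIndex {a b m : ℕ} (h : a + 2 * m ≤ b) (v : ℕ) :
    crossIndex a b m (crossIndex a b m v) = v := by
  unfold crossIndex
  split_ifs <;> omega

lemma crossIndex_lt {a b m v : ℕ} (hv : v < n) (hb : b ≤ n) :
    crossIndex a b m v < n := by
  unfold crossIndex
  split_ifs <;> omega

lemma lt_crossIndex_iff {a b m v : ℕ} (h : a + 2 * m ≤ b) :
    v < crossIndex a b m v ↔ a ≤ v ∧ v < a + m := by
  unfold crossIndex
  split_ifs <;> omega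

def crossMatching {a b m : ℕ} (h : a + 2 * m ≤ b) (hb : b ≤ n) : Equiv.Perm (Fin n) :=
  Function.Involutive.toPerm (fun x => ⟨crossIndex a b m x, crossIndex_lt x.2 hb⟩)
    fun x => Fin.ext (crossIndex_crossIndex h x)

lemma isInvol_crossMatching {a b m : ℕ} (h : a + 2 * m ≤ b) (hb : b ≤ n) :
    IsInvol (crossMatching h hb) :=
  Equiv.ext fun x => Fin.ext (crossIndex_crossIndex h x)

lemma le_card_arcs_crossMatching {a b m : ℕ} (h : a + 2 * m ≤ b) (hb : b ≤ n) :
    m ≤ (arcs (crossMatching h hb) a b).card := by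
  have hsurj : Set.SurjOn Fin.val (arcs (crossMatching h hb) a b : Set (Fin n))
      (Finset.Ico a (a + m)) := by
    intro v hv
    simp only [Finset.coe_Ico, Set.mem_Ico] at hv
    refine ⟨⟨v, by omega⟩, ?_, rfl⟩
    have hlt : v < crossIndex a b m v := (lt_crossIndex_iff h).mpr hv
    simp only [Finset.mem_coe, mem_arcs]
    refine ⟨hv.1, hlt, ?_⟩
    show crossIndex a b m v < b
    unfold crossIndex at hlt ⊢
    split_ifs at hlt ⊢ <;> omega
  simpa using Finset.card_le_card_of_surjOn Fin.val hsurj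

lemma card_arcs_crossMatching_le {a b m : ℕ} (h : a + 2 * m ≤ b) (hb : b ≤ n) (c d : ℕ) :
    (arcs (crossMatching h hb) c d).card ≤ m - (c - a) - (b - d) := by
  calc (arcs (crossMatching h hb) c d).card
      ≤ ({x | a + (c - a) ≤ (x : ℕ) ∧ (x : ℕ) < a + m - (b - d)} : Finset (Fin n)).card := by
        refine Finset.card_le_card fun x hx => ?_
        obtain ⟨hc, hlt, hd⟩ := mem_arcs.mp hx
        have hx' := (lt_crossIndex_iff h).mp hlt
        change crossIndex a b m x < d at hd
        rw [crossIndex, if_pos hx'] at hd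
        simp only [Finset.mem_filter, Finset.mem_univ, true_and]
        omega
    _ ≤ m - (c - a) - (b - d) :=
        (Finset.card_le_sub_of_injOn_Ico (c := a + (c - a)) (d := a + m - (b - d)) (by simp)
          Fin.val_injective.injOn).trans (by omega)

lemma card_arcs_crossMatching_le_card_arcs {a b m : ℕ} (h : a + 2 * m ≤ b) (hb : b ≤ n)
    {σ : Equiv.Perm (Fin n)} (hσ : m ≤ (arcs σ a b).card) (c d : ℕ) :
    (arcs (crossMatching h hb) c d).card ≤ (arcs σ c d).card := by
  have := card_arcs_le_card_arcs_add σ a b c d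
  have := card_arcs_crossMatching_le h hb c d
  omega

lemma exists_isInvol_Rfun_le_min_attaining {σ : Equiv.Perm (Fin n)} (hσ : IsInvol σ)
    (σ' : Equiv.Perm (Fin n)) {i j : ℕ} (hi : 1 ≤ i) (hij : i < j) (hj : j ≤ n) :
    ∃ τ : Equiv.Perm (Fin n), IsInvol τ ∧
      (∀ p q, Rfun τ p q ≤ min (Rfun σ p q) (Rfun σ' p q)) ∧
      min (Rfun σ i j) (Rfun σ' i j) ≤ Rfun τ i j := by
  set m := min (arcs σ (i - 1) j).card (arcs σ' (i - 1) j).card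
  have h : i - 1 + 2 * m ≤ j := by
    have := two_mul_card_arcs_le hσ (i - 1) j
    omega
  refine ⟨crossMatching h hj, isInvol_crossMatching h hj, fun p q => le_min ?_ ?_, ?_⟩
  · exact Rfun_le_Rfun_of_card_arcs_le
      (card_arcs_crossMatching_le_card_arcs h hj (min_le_left _ _)) p q
  · exact Rfun_le_Rfun_of_card_arcs_le
      (card_arcs_crossMatching_le_card_arcs h hj (min_le_right _ _)) p q
  · simp only [Rfun_eq_card_arcs _ hi hij hj]
    exact le_card_arcs_crossMatching h hj

end Arcs

theorem stmt16_general (n : ℕ) (σ σ' : Equiv.Perm (Fin n))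
    (hσ : IsInvol σ) :
    (∃ δ : Equiv.Perm (Fin n), IsInvol δ ∧
      (∀ i j, Rfun δ i j ≤ min (Rfun σ i j) (Rfun σ' i j)) ∧
      ∀ τ : Equiv.Perm (Fin n), IsInvol τ →
        (∀ i j, Rfun τ i j ≤ min (Rfun σ i j) (Rfun σ' i j)) →
        ∀ i j, Rfun τ i j ≤ Rfun δ i j) ↔
    (∃ η : Equiv.Perm (Fin n), IsInvol η ∧
      ∀ i j, Rfun η i j = min (Rfun σ i j) (Rfun σ' i j)) := by
  constructor
  · rintro ⟨δ, hδ, hδle, hδmax⟩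
    refine ⟨δ, hδ, fun i j => (hδle i j).antisymm ?_⟩
    by_cases hr : 1 ≤ i ∧ i < j ∧ j ≤ n
    · obtain ⟨τ, hτ, hτle, hτij⟩ :=
        exists_isInvol_Rfun_le_min_attaining hσ σ' hr.1 hr.2.1 hr.2.2
      exact hτij.trans (hδmax τ hτ hτle i j)
    · simp [Rfun_eq_zero hr]
  · rintro ⟨η, hη, hηeq⟩
    exact ⟨η, hη, fun i j => (hηeq i j).le, fun τ _ hτ i j => (hτ i j).trans (hηeq i j).ge⟩

/-- the involutions `τ` with `R_τ ⪯ min(R_σ, R_{σ'})` have a maximum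
element iff the minimum is itself a rank matrix of an involution. -/
theorem stmt16 (n : ℕ) (hn : 1 ≤ n) (σ σ' : Equiv.Perm (Fin n))
    (hσ : IsInvol σ) (hσ' : IsInvol σ') :
    (∃ δ : Equiv.Perm (Fin n), IsInvol δ ∧
      (∀ i j, Rfun δ i j ≤ min (Rfun σ i j) (Rfun σ' i j)) ∧
      ∀ τ : Equiv.Perm (Fin n), IsInvol τ →
        (∀ i j, Rfun τ i j ≤ min (Rfun σ i j) (Rfun σ' i j)) →
        ∀ i j, Rfun τ i j ≤ Rfun δ i j) ↔
    (∃ η : Equiv.Perm (Fin n), IsInvol η ∧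
      ∀ i j, Rfun η i j = min (Rfun σ i j) (Rfun σ' i j)) :=
  stmt16_general n σ σ' hσ
end

section
/- Let n = 6, σ = (2,3)(5,6) and σ' = (1,2)(4,5) (the involutions attached to the two standard Young tableaux of shape (2,2,1,1) with columns ({1,2,4,5},{3,6}) and ({1,3,4,6},{2,5})), and let M be the entrywise minimum of R_σ and R_{σ'}. Then no involution τ of {1,…,6} satisfies R_τ = M, and the maximal elements, with respect to ⪯, of the set of involutions τ with R_τ ⪯ M are exactly the two involutions (1,3)(4,6) and (1,6)(2,5). Moreover the dimension over ℂ of the space of upper-triangular 6×6 matrices commuting with N_{(1,3)(4,6)} is 15, while for N_{(1,6)(2,5)} it is 17 (so the corresponding B-orbits have dimensions 6 and 4, giving an intersection of two orbital varieties whose components have different dimensions). -/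
open Matrix

/-!
The block `π_{i,j}(N_σ)` is a partial permutation matrix, so its rank is the number of arcs
`a < σ a` of `σ` with both endpoints in `[i, j]`. This makes `R_τ` a computable count, and the
claims about rank matrices become a finite check over the involutions of `S₆`: exactly seventeen
satisfy `R_τ ⪯ M`, none of them attains `M`, and the maximal ones are `(1,3)(4,6)` and
`(1,6)(2,5)`. For the dimensions, `(z N_σ)_{a,b}` is `z_{a,σ⁻¹ b}` if `σ⁻¹ b < b` and
`(N_σ z)_{a,b}` is `z_{σ a,b}` if `a < σ a` (both are 0 otherwise), so solving `z N_σ = N_σ z`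
entrywise leaves 15, respectively 17, free upper-triangular entries.
-/

open Equiv Finset

namespace Matrix

variable {K : Type*} [Field K] {m n ι : Type*} [Fintype m] [Fintype n] [Fintype ι]

theorem rank_mul_eq_card_of_leftInv_of_rightInv [DecidableEq ι] {A : Matrix m ι K}
    {B : Matrix ι n K} {A' : Matrix ι m K} {B' : Matrix n ι K} (hA : A' * A = 1)
    (hB : B * B' = 1) : (A * B).rank = Fintype.card ι := by
  refine le_antisymm ((rank_mul_le_left A B).trans (rank_le_card_width A)) ?_
  calc Fintype.card ι = (A' * (A * B) * B').rank := by
        rw [← Matrix.mul_assoc, hA, Matrix.one_mul, hB, rank_one]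
    _ ≤ (A * B).rank := (rank_mul_le_left _ _).trans (rank_mul_le_right _ _)

theorem rank_of_partialMatching [DecidableEq m] [DecidableEq n] (R : m → n → Prop)
    [DecidableRel R] (hfun : ∀ x y y', R x y → R x y' → y = y')
    (hinj : ∀ x x' y, R x y → R x' y → x = x') :
    (of fun x y => if R x y then (1 : K) else 0).rank =
      Fintype.card {p : m × n // R p.1 p.2} := by
  let A : Matrix m {p : m × n // R p.1 p.2} K := of fun x t => if x = t.1.1 then 1 else 0
  let B : Matrix {p : m × n // R p.1 p.2} n K := of fun t y => if t.1.2 = y then 1 else 0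
  have hAB : A * B = of fun x y => if R x y then (1 : K) else 0 := by
    ext x y
    by_cases h : R x y
    · rw [mul_apply, Fintype.sum_eq_single ⟨(x, y), h⟩]
      · simp [A, B, h]
      · rintro ⟨⟨x', y'⟩, h'⟩ hne
        simp only [A, B, of_apply, mul_ite, mul_one, mul_zero]
        split_ifs with h₁ h₂ <;> simp_all
    · simp only [A, B, mul_apply, of_apply, mul_ite, mul_one, mul_zero, if_neg h]
      refine Finset.sum_eq_zero fun t _ => ?_
      split_ifs with h₁ h₂
      · exact absurd (h₁ ▸ h₂ ▸ t.2) h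
      all_goals rfl
  have hA : Aᵀ * A = 1 := by
    ext s t
    simp only [mul_apply, transpose_apply, of_apply, mul_ite, mul_one, mul_zero,
      Finset.sum_ite_eq', Finset.mem_univ, ↓reduceIte, one_apply, A]
    exact if_congr ⟨fun h => Subtype.ext (Prod.ext h.symm (hfun _ _ _ s.2 (h ▸ t.2))),
      fun h => h ▸ rfl⟩ rfl rfl
  have hB : B * Bᵀ = 1 := by
    ext s t
    simp only [mul_apply, of_apply, transpose_apply, mul_ite, mul_one, mul_zero,
      Finset.sum_ite_eq, Finset.mem_univ, ↓reduceIte, one_apply, B]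
    exact if_congr ⟨fun h => Subtype.ext (Prod.ext (hinj _ _ _ (h ▸ s.2) t.2) h),
      fun h => h ▸ rfl⟩ rfl rfl
  rw [← hAB, rank_mul_eq_card_of_leftInv_of_rightInv hA hB]

end Matrix

theorem finrank_eq_card_of_coordinates {K M ι : Type*} [Field K] [AddCommGroup M] [Module K M]
    [Fintype ι] {V : Submodule K M} (φ : M →ₗ[K] ι → K) (ψ : (ι → K) → M)
    (hψ : ∀ v, ψ v ∈ V) (hφψ : ∀ v, φ (ψ v) = v) (hψφ : ∀ z ∈ V, ψ (φ z) = z) :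
    Module.finrank K V = Fintype.card ι := by
  have hbij : Function.Bijective (φ ∘ₗ V.subtype) := by
    refine ⟨fun z z' h => Subtype.ext ?_, fun v => ⟨⟨ψ v, hψ v⟩, hφψ v⟩⟩
    rw [← hψφ z z.2, ← hψφ z' z'.2]
    exact congrArg ψ h
  rw [(LinearEquiv.ofBijective _ hbij).finrank_eq, Module.finrank_fintype_fun_eq_card]

-- `i`, `j` are 1-based as in `Rfun`, the endpoints `a`, `σ a` are 0-based.
def arcCount {n : ℕ} (σ : Perm (Fin n)) (i j : ℕ) : ℕ :=
  if 1 ≤ i ∧ i < j ∧ j ≤ n then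
    #{a : Fin n | a < σ a ∧ i ≤ a.1 + 1 ∧ (σ a).1 + 1 ≤ j}
  else 0

theorem Rfun_eq_arcCount {n : ℕ} (σ : Perm (Fin n)) (i j : ℕ) :
    Rfun σ i j = arcCount σ i j := by
  unfold Rfun arcCount
  split_ifs with h
  swap; · rfl
  obtain ⟨hi, hij, hj⟩ := h
  let e : Fin (j + 1 - i) → Fin n := fun x => ⟨i - 1 + x, by omega⟩
  let R : Fin (j + 1 - i) → Fin (j + 1 - i) → Prop := fun x y => e x < e y ∧ σ (e x) = e y
  have he : Function.Injective e := fun x y hxy => by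
    simpa [e, Fin.ext_iff] using hxy
  have hblk : blk (Nmat σ) i j hi hij.le hj = of fun x y => if R x y then (1 : ℂ) else 0 := rfl
  rw [hblk, Matrix.rank_of_partialMatching R
    (fun x y y' h h' => he (h.2.symm.trans h'.2))
    (fun x x' y h h' => he (σ.injective (h.2.trans h'.2.symm))), ← Fintype.card_subtype]
  refine Fintype.card_congr
    { toFun := fun p => ⟨e p.1.1, ?_⟩
      invFun := fun a => ⟨(⟨a.1 - (i - 1), ?_⟩, ⟨σ a.1 - (i - 1), ?_⟩), ?_⟩
      left_inv := ?_
      right_inv := ?_ }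
  · obtain ⟨⟨x, y⟩, hlt, hσ⟩ := p
    have := y.2
    simp only [hσ, e, Fin.lt_def] at hlt ⊢
    omega
  · have := a.2.2.1; omega
  · have := a.2.2.2; omega
  · obtain ⟨a, hlt, hi', hj'⟩ := a
    have ha : i - 1 + (a.1 - (i - 1)) = a := by omega
    have hσa : i - 1 + ((σ a).1 - (i - 1)) = σ a := by omega
    simp only [R, e, ha, hσa, Fin.eta]
    exact ⟨hlt, trivial⟩
  · rintro ⟨⟨x, y⟩, hlt, hσ⟩
    have := y.2
    simp only [hσ, e, Fin.lt_def] at hlt ⊢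
    ext <;> simp
  · rintro ⟨a, hlt, hi', hj'⟩
    ext
    simp only [e]
    omega

theorem forall_arcCount_le_iff {n : ℕ} (σ : Perm (Fin n)) (f : ℕ → ℕ → ℕ) :
    (∀ i j, arcCount σ i j ≤ f i j) ↔
      ∀ i < n + 1, ∀ j < n + 1, arcCount σ i j ≤ f i j := by
  refine ⟨fun h i _ j _ => h i j, fun h i j => ?_⟩
  by_cases hij : i < n + 1 ∧ j < n + 1
  · exact h i hij.1 j hij.2
  · rw [arcCount, if_neg (by omega)]
    exact Nat.zero_le _

theorem mul_Nmat_apply {n : ℕ} (z : Matrix (Fin n) (Fin n) ℂ) (σ : Perm (Fin n))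
    (a b : Fin n) :
    (z * Nmat σ) a b = if σ⁻¹ b < b then z a (σ⁻¹ b) else 0 := by
  rw [Matrix.mul_apply, Fintype.sum_eq_single (σ⁻¹ b)]
  · simp [Nmat]
  · intro c hc
    have : σ c ≠ b := fun h => hc (σ.eq_inv_iff_eq.mpr h)
    simp [Nmat, this]

theorem Nmat_mul_apply {n : ℕ} (z : Matrix (Fin n) (Fin n) ℂ) (σ : Perm (Fin n))
    (a b : Fin n) :
    (Nmat σ * z) a b = if a < σ a then z (σ a) b else 0 := by
  rw [Matrix.mul_apply, Fintype.sum_eq_single (σ a)]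
  · simp [Nmat]
  · intro c hc
    simp [Nmat, Ne.symm hc]

theorem mem_commUT_Nmat_iff {n : ℕ} (σ : Perm (Fin n)) (z : Matrix (Fin n) (Fin n) ℂ) :
    z ∈ commUT (Nmat σ) ↔ UpperTri z ∧ ∀ a b,
      (if σ⁻¹ b < b then z a (σ⁻¹ b) else 0) = if a < σ a then z (σ a) b else 0 := by
  show UpperTri z ∧ z * Nmat σ = Nmat σ * z ↔ _
  simp only [← Matrix.ext_iff, mul_Nmat_apply, Nmat_mul_apply]

@[simps]
def entryCoords {R m ι : Type*} [CommSemiring R] (p : ι → m × m) :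
    Matrix m m R →ₗ[R] ι → R where
  toFun z l := z (p l).1 (p l).2
  map_add' _ _ := rfl
  map_smul' _ _ := rfl

def minArcCount (i j : ℕ) : ℕ :=
  min (arcCount (swap 1 2 * swap 4 5 : Perm (Fin 6)) i j)
    (arcCount (swap 0 1 * swap 3 4 : Perm (Fin 6)) i j)

def involutionsBelowMin : List (Perm (Fin 6)) :=
  [1, swap 3 5, swap 2 5, swap 1 4, swap 1 5, swap 0 2, swap 0 2 * swap 3 5,
    swap 0 2 * swap 1 5, swap 0 3, swap 0 3 * swap 2 5, swap 0 3 * swap 1 5, swap 0 4,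
    swap 0 4 * swap 3 5, swap 0 4 * swap 2 5, swap 0 4 * swap 1 5, swap 0 5,
    swap 0 5 * swap 1 4]

set_option maxRecDepth 100000 in
theorem mem_involutionsBelowMin_iff : ∀ τ : Perm (Fin 6), τ ∈ involutionsBelowMin ↔
    τ * τ = 1 ∧ ∀ i < 7, ∀ j < 7, arcCount τ i j ≤ minArcCount i j := by
  decide

set_option maxRecDepth 100000 in
theorem not_forall_arcCount_eq_minArcCount : ∀ τ ∈ involutionsBelowMin,
    ¬ ∀ i < 7, ∀ j < 7, arcCount τ i j = minArcCount i j := by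
  decide

set_option maxRecDepth 100000 in
theorem maximal_involutionsBelowMin_iff : ∀ τ ∈ involutionsBelowMin,
    (∀ ρ ∈ involutionsBelowMin,
        (∀ i < 7, ∀ j < 7, arcCount τ i j ≤ arcCount ρ i j) → ρ = τ) ↔
      τ = swap 0 2 * swap 3 5 ∨ τ = swap 0 5 * swap 1 4 := by
  decide

def commutantParamA (v : Fin 15 → ℂ) : Matrix (Fin 6) (Fin 6) ℂ :=
  !![v 0, v 1, v 2, v 3,  v 4,  v 5;
     0,   v 6, v 7, 0,    v 8,  v 9;
     0,   0,   v 0, 0,    0,    v 3;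
     0,   0,   0,   v 10, v 11, v 12;
     0,   0,   0,   0,    v 13, v 14;
     0,   0,   0,   0,    0,    v 10]

theorem finrank_commUT_A :
    Module.finrank ℂ (commUT (Nmat (swap 0 2 * swap 3 5 : Perm (Fin 6)))) = 15 := by
  refine (finrank_eq_card_of_coordinates
    (entryCoords ![(0, 0), (0, 1), (0, 2), (0, 3), (0, 4), (0, 5), (1, 1), (1, 2), (1, 4), (1, 5),
      (3, 3), (3, 4), (3, 5), (4, 4), (4, 5)]) commutantParamA ?_ ?_ ?_).trans
    (Fintype.card_fin _)
  · intro v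
    rw [mem_commUT_Nmat_iff]
    refine ⟨fun a b hba => ?_, fun a b => ?_⟩
    · fin_cases a <;> fin_cases b <;> first | exact absurd hba (by decide) | rfl
    · fin_cases a <;> fin_cases b <;> simp [commutantParamA, swap_apply_def]
  · intro v
    funext k
    fin_cases k <;> rfl
  · intro z hz
    obtain ⟨hu, hc⟩ := (mem_commUT_Nmat_iff _ z).mp hz
    unfold UpperTri at hu
    have h22 : z 2 2 = z 0 0 := by simpa [swap_apply_def] using (hc 0 2).symm
    have h25 : z 2 5 = z 0 3 := by simpa [swap_apply_def] using (hc 0 5).symm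
    have h24 : z 2 4 = 0 := by simpa [swap_apply_def] using (hc 0 4).symm
    have h13 : z 1 3 = 0 := by simpa [swap_apply_def] using hc 1 5
    have h23 : z 2 3 = 0 := by simpa [swap_apply_def] using hc 2 5
    have h55 : z 5 5 = z 3 3 := by simpa [swap_apply_def] using (hc 3 5).symm
    ext a b
    fin_cases a <;> fin_cases b <;> simp [commutantParamA, hu, h22, h25, h24, h13, h23, h55]

def commutantParamB (v : Fin 17 → ℂ) : Matrix (Fin 6) (Fin 6) ℂ :=
  !![v 0, 0,   v 1,  v 2,  v 3,  v 4;
     0,   v 5, v 6,  v 7,  v 8,  v 9;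
     0,   0,   v 10, v 11, v 12, v 13;
     0,   0,   0,    v 14, v 15, v 16;
     0,   0,   0,    0,    v 5,  0;
     0,   0,   0,    0,    0,    v 0]

theorem finrank_commUT_B :
    Module.finrank ℂ (commUT (Nmat (swap 0 5 * swap 1 4 : Perm (Fin 6)))) = 17 := by
  refine (finrank_eq_card_of_coordinates
    (entryCoords ![(0, 0), (0, 2), (0, 3), (0, 4), (0, 5), (1, 1), (1, 2), (1, 3), (1, 4), (1, 5),
      (2, 2), (2, 3), (2, 4), (2, 5), (3, 3), (3, 4), (3, 5)]) commutantParamB ?_ ?_ ?_).trans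
    (Fintype.card_fin _)
  · intro v
    rw [mem_commUT_Nmat_iff]
    refine ⟨fun a b hba => ?_, fun a b => ?_⟩
    · fin_cases a <;> fin_cases b <;> first | exact absurd hba (by decide) | rfl
    · fin_cases a <;> fin_cases b <;> simp [commutantParamB, swap_apply_def]
  · intro v
    funext k
    fin_cases k <;> rfl
  · intro z hz
    obtain ⟨hu, hc⟩ := (mem_commUT_Nmat_iff _ z).mp hz
    unfold UpperTri at hu
    have h55 : z 5 5 = z 0 0 := by simpa [swap_apply_def] using (hc 0 5).symm
    have h44 : z 4 4 = z 1 1 := by simpa [swap_apply_def] using (hc 1 4).symm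
    have h45 : z 4 5 = 0 := by simpa [swap_apply_def, hu] using (hc 1 5).symm
    have h01 : z 0 1 = 0 := by simpa [swap_apply_def, hu] using hc 0 4
    ext a b
    fin_cases a <;> fin_cases b <;> simp [commutantParamB, hu, h55, h44, h45, h01]

/-- for `n = 6`, `σ = (2,3)(5,6)`, `σ' = (1,2)(4,5)`, the entrywise minimum
of the rank matrices is not a rank matrix; the maximal involutions below it are exactly
`(1,3)(4,6)` and `(1,6)(2,5)`, whose upper-triangular commutants have dimensions 15
and 17 (orbit dimensions 6 and 4). -/
theorem stmt18 :
    let σ : Equiv.Perm (Fin 6) := Equiv.swap 1 2 * Equiv.swap 4 5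
    let σ' : Equiv.Perm (Fin 6) := Equiv.swap 0 1 * Equiv.swap 3 4
    let M : ℕ → ℕ → ℕ := fun i j => min (Rfun σ i j) (Rfun σ' i j)
    (¬ ∃ τ : Equiv.Perm (Fin 6), IsInvol τ ∧ ∀ i j, Rfun τ i j = M i j) ∧
    (∀ τ : Equiv.Perm (Fin 6), IsInvol τ → (∀ i j, Rfun τ i j ≤ M i j) →
      ((∀ ρ : Equiv.Perm (Fin 6), IsInvol ρ → (∀ i j, Rfun ρ i j ≤ M i j) →
          (∀ i j, Rfun τ i j ≤ Rfun ρ i j) → ρ = τ) ↔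
        (τ = Equiv.swap 0 2 * Equiv.swap 3 5 ∨ τ = Equiv.swap 0 5 * Equiv.swap 1 4))) ∧
    Module.finrank ℂ (commUT (Nmat (Equiv.swap 0 2 * Equiv.swap 3 5 : Equiv.Perm (Fin 6)))) = 15 ∧
    Module.finrank ℂ (commUT (Nmat (Equiv.swap 0 5 * Equiv.swap 1 4 : Equiv.Perm (Fin 6)))) = 17 := by
  intro σ σ' M
  have below : ∀ τ, IsInvol τ ∧ (∀ i j, Rfun τ i j ≤ M i j) ↔ τ ∈ involutionsBelowMin := by
    intro τ
    simp only [mem_involutionsBelowMin_iff, M, Rfun_eq_arcCount, forall_arcCount_le_iff]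
    rfl
  refine ⟨?_, fun τ hτ hτM => ?_, finrank_commUT_A, finrank_commUT_B⟩
  · rintro ⟨τ, hτ, hτM⟩
    refine not_forall_arcCount_eq_minArcCount τ ((below τ).1 ⟨hτ, fun i j => (hτM i j).le⟩)
      fun i _ j _ => ?_
    have h := hτM i j
    simp only [M, Rfun_eq_arcCount] at h
    exact h
  · rw [← maximal_involutionsBelowMin_iff τ ((below τ).1 ⟨hτ, hτM⟩)]
    refine forall_congr' fun ρ => ?_
    rw [← below, and_imp]
    simp only [Rfun_eq_arcCount, forall_arcCount_le_iff]
end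

section
/- Let n = 6, σ = (1,6)(2,5)(3,4) and σ' = (1,2)(3,4)(5,6) (the involutions attached to the standard Young tableaux of shape (2,2,2) with second columns read as rows (4,5,6) and (2,4,6) respectively). Then the entrywise minimum of R_σ and R_{σ'} equals R_{(1,5)(2,6)(3,4)}; in particular this minimum is itself the rank matrix of an involution, so the intersection of the corresponding orbit closures is irreducible (and of codimension 1), even though the corresponding pair of tableaux is not joined by an edge in any cell graph. -/
open Matrix

open scoped ComplexOrder

lemma mul_conjT_pattern {m : ℕ} (f : Fin m → Option (Fin m))
    (hf : ∀ a a' b, f a = some b → f a' = some b → a = a') :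
    (Matrix.of fun a b : Fin m => if f a = some b then (1:ℂ) else 0) *
      (Matrix.of fun a b : Fin m => if f a = some b then (1:ℂ) else 0)ᴴ =
    Matrix.diagonal (fun a => if (f a).isSome then (1:ℂ) else 0) := by
  ext p q
  simp only [Matrix.mul_apply, Matrix.conjTranspose_apply, Matrix.of_apply]
  by_cases hpq : p = q
  · subst hpq
    rcases h : f p with _ | b0
    · simp [h, Matrix.diagonal_apply_eq]
    · simp only [h, Option.isSome_some, Matrix.diagonal_apply_eq, if_true]
      rw [Finset.sum_eq_single b0]
      · simp
      · intro b _ hb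
        simp [Option.some_inj, (Ne.symm hb : b0 ≠ b)]
      · simp
  · rw [Matrix.diagonal_apply_ne _ hpq]
    apply Finset.sum_eq_zero
    intro b _
    by_cases h1 : f p = some b
    · by_cases h2 : f q = some b
      · exact absurd (hf p q b h1 h2) hpq
      · simp [h2]
    · simp [h1]

lemma rank_pattern {m : ℕ} (f : Fin m → Option (Fin m))
    (hf : ∀ a a' b, f a = some b → f a' = some b → a = a') :
    (Matrix.of fun a b : Fin m => if f a = some b then (1:ℂ) else 0).rank =
      Fintype.card {a // (f a).isSome} := by
  rw [← Matrix.rank_self_mul_conjTranspose, mul_conjT_pattern f hf, Matrix.rank_diagonal]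
  apply Fintype.card_congr
  apply Equiv.subtypeEquivRight
  intro a
  by_cases h : (f a).isSome <;> simp [h]

lemma Rfun_eq {n : ℕ} (σ : Equiv.Perm (Fin n)) (i j : ℕ) (h : 1 ≤ i ∧ i < j ∧ j ≤ n) :
    Rfun σ i j = Fintype.card {a : Fin (j + 1 - i) //
      i - 1 + a.1 < (σ ⟨i - 1 + a.1, by have := a.2; omega⟩ : Fin n).1 ∧
      (σ ⟨i - 1 + a.1, by have := a.2; omega⟩ : Fin n).1 ≤ j - 1} := by
  obtain ⟨h1, h2, h3⟩ := h
  have e : ∀ a : Fin (j + 1 - i), i - 1 + a.1 < n := fun a => by have := a.2; omega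
  simp only [Rfun, dif_pos (⟨h1, h2, h3⟩ : 1 ≤ i ∧ i < j ∧ j ≤ n)]
  classical
  set f : Fin (j + 1 - i) → Option (Fin (j + 1 - i)) := fun a =>
    if hP : i - 1 + a.1 < (σ ⟨i - 1 + a.1, e a⟩ : Fin n).1 ∧
        (σ ⟨i - 1 + a.1, e a⟩ : Fin n).1 ≤ j - 1
    then some ⟨(σ ⟨i - 1 + a.1, e a⟩ : Fin n).1 - (i - 1), by omega⟩ else none with hfdef
  have hfinj : ∀ a a' b, f a = some b → f a' = some b → a = a' := by
    intro a a' b ha ha'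
    simp only [hfdef] at ha ha'
    split_ifs at ha ha' with hPa hPa'
    · have va := congrArg Fin.val (Option.some_inj.mp ha)
      have va' := congrArg Fin.val (Option.some_inj.mp ha')
      simp only [Fin.val_mk] at va va'
      have hv : (σ ⟨i - 1 + a.1, e a⟩ : Fin n).1 = (σ ⟨i - 1 + a'.1, e a'⟩ : Fin n).1 := by omega
      have := σ.injective (Fin.ext hv)
      have := congrArg Fin.val this
      simp only [Fin.val_mk] at this
      exact Fin.ext (by (try simp only [Fin.val_mk]); omega)
  have hmat : blk (Nmat σ) i j h1 (le_of_lt h2) h3 =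
      Matrix.of (fun a b => if f a = some b then (1:ℂ) else 0) := by
    ext a b
    simp only [blk, Nmat, Matrix.of_apply, hfdef]
    by_cases hP : i - 1 + a.1 < (σ ⟨i - 1 + a.1, e a⟩ : Fin n).1 ∧
        (σ ⟨i - 1 + a.1, e a⟩ : Fin n).1 ≤ j - 1
    · rw [dif_pos hP]
      by_cases hc : (⟨i - 1 + a.1, e a⟩ : Fin n) < ⟨i - 1 + b.1, e b⟩ ∧
          σ ⟨i - 1 + a.1, e a⟩ = ⟨i - 1 + b.1, e b⟩
      · rw [if_pos hc, if_pos]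
        have hv := congrArg Fin.val hc.2
        simp only [Fin.val_mk] at hv
        exact congrArg some (Fin.ext (by (try simp only [Fin.val_mk]); omega))
      · rw [if_neg hc, if_neg]
        intro hsome
        apply hc
        have hv := congrArg Fin.val (Option.some_inj.mp hsome)
        simp only [Fin.val_mk] at hv
        have hb2 := b.2
        constructor
        · exact Fin.mk_lt_mk.mpr (by omega)
        · exact Fin.ext (by (try simp only [Fin.val_mk]); omega)
    · rw [dif_neg hP, if_neg]
      · simp
      · rintro ⟨hlt, heq⟩
        apply hP
        have hv := congrArg Fin.val heq
        simp only [Fin.val_mk] at hv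
        have := Fin.mk_lt_mk.mp hlt
        have hb2 := b.2
        constructor <;> omega
  rw [hmat, rank_pattern f hfinj]
  apply Fintype.card_congr
  apply Equiv.subtypeEquivRight
  intro a
  by_cases hP : i - 1 + a.1 < (σ ⟨i - 1 + a.1, e a⟩ : Fin n).1 ∧
      (σ ⟨i - 1 + a.1, e a⟩ : Fin n).1 ≤ j - 1
  · simp [hfdef, hP]
  · simp [hfdef, hP]


def NA : Matrix (Fin 6) (Fin 6) ℂ := Matrix.of fun p q =>
  if p.1 = 0 ∧ q.1 = 5 ∨ p.1 = 1 ∧ q.1 = 4 ∨ p.1 = 2 ∧ q.1 = 3 then 1 else 0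

lemma hNA : Nmat (Equiv.swap 0 5 * Equiv.swap 1 4 * Equiv.swap 2 3) = NA := by
  ext p q
  fin_cases p <;> fin_cases q <;> rfl

def MA (c : Fin 12 → ℂ) : Matrix (Fin 6) (Fin 6) ℂ :=
  Matrix.of fun p q =>
    if p.1 = 0 ∧ q.1 = 0 then c 9 else
    if p.1 = 1 ∧ q.1 = 1 then c 10 else
    if p.1 = 2 ∧ q.1 = 2 then c 11 else
    if p.1 = 0 ∧ q.1 = 3 then c 0 else
    if p.1 = 0 ∧ q.1 = 4 then c 1 else
    if p.1 = 0 ∧ q.1 = 5 then c 2 else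
    if p.1 = 1 ∧ q.1 = 3 then c 3 else
    if p.1 = 1 ∧ q.1 = 4 then c 4 else
    if p.1 = 1 ∧ q.1 = 5 then c 5 else
    if p.1 = 2 ∧ q.1 = 3 then c 6 else
    if p.1 = 2 ∧ q.1 = 4 then c 7 else
    if p.1 = 2 ∧ q.1 = 5 then c 8 else
    if p.1 = 3 ∧ q.1 = 3 then c 11 else
    if p.1 = 4 ∧ q.1 = 4 then c 10 else
    if p.1 = 5 ∧ q.1 = 5 then c 9 else 0

def LA : (Fin 12 → ℂ) →ₗ[ℂ] Matrix (Fin 6) (Fin 6) ℂ where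
  toFun := MA
  map_add' x y := by
    ext p q
    fin_cases p <;> fin_cases q <;> simp (config := { decide := true }) [MA]
  map_smul' m x := by
    ext p q
    fin_cases p <;> fin_cases q <;> simp (config := { decide := true }) [MA]

lemma LA_inj : Function.Injective LA := by
  intro c d h
  have hpq : ∀ p q, MA c p q = MA d p q := fun p q => congrFun (congrFun h p) q
  funext k
  fin_cases k
  · simpa (config := { decide := true }) [MA] using hpq 0 3
  · simpa (config := { decide := true }) [MA] using hpq 0 4
  · simpa (config := { decide := true }) [MA] using hpq 0 5
  · simpa (config := { decide := true }) [MA] using hpq 1 3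
  · simpa (config := { decide := true }) [MA] using hpq 1 4
  · simpa (config := { decide := true }) [MA] using hpq 1 5
  · simpa (config := { decide := true }) [MA] using hpq 2 3
  · simpa (config := { decide := true }) [MA] using hpq 2 4
  · simpa (config := { decide := true }) [MA] using hpq 2 5
  · simpa (config := { decide := true }) [MA] using hpq 0 0
  · simpa (config := { decide := true }) [MA] using hpq 1 1
  · simpa (config := { decide := true }) [MA] using hpq 2 2

set_option maxHeartbeats 1000000 in
lemma commA : commUT NA = LinearMap.range LA := by
  apply le_antisymm
  · rintro z ⟨hup, hcomm⟩
    have E : ∀ p q : Fin 6, (z * NA) p q = (NA * z) p q := fun p q =>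
      congrFun (congrFun hcomm p) q
    have eqA : z 0 0 = z 5 5 := by
      have h := E 0 5
      simpa (config := { decide := true }) [Matrix.mul_apply, Fin.sum_univ_six, NA] using h
    have eqB : z 1 1 = z 4 4 := by
      have h := E 1 4
      simpa (config := { decide := true }) [Matrix.mul_apply, Fin.sum_univ_six, NA] using h
    have eqC : z 2 2 = z 3 3 := by
      have h := E 2 3
      simpa (config := { decide := true }) [Matrix.mul_apply, Fin.sum_univ_six, NA] using h
    have eqD : z 0 1 = 0 := by
      have h := E 0 4
      simpa (config := { decide := true }) [Matrix.mul_apply, Fin.sum_univ_six, NA,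
        hup 5 4 (by decide)] using h
    have eqE : z 0 2 = 0 := by
      have h := E 0 3
      simpa (config := { decide := true }) [Matrix.mul_apply, Fin.sum_univ_six, NA,
        hup 5 3 (by decide)] using h
    have eqF : z 1 2 = 0 := by
      have h := E 1 3
      simpa (config := { decide := true }) [Matrix.mul_apply, Fin.sum_univ_six, NA,
        hup 4 3 (by decide)] using h
    have eqG : z 4 5 = 0 := by
      have h := E 1 5
      simpa (config := { decide := true }) [Matrix.mul_apply, Fin.sum_univ_six, NA,
        hup 1 0 (by decide)] using h.symm
    have eqH : z 3 5 = 0 := by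
      have h := E 2 5
      simpa (config := { decide := true }) [Matrix.mul_apply, Fin.sum_univ_six, NA,
        hup 2 0 (by decide)] using h.symm
    have eqI : z 3 4 = 0 := by
      have h := E 2 4
      simpa (config := { decide := true }) [Matrix.mul_apply, Fin.sum_univ_six, NA,
        hup 2 1 (by decide)] using h.symm
    refine ⟨fun k =>
      if k.1 = 0 then z 0 3 else if k.1 = 1 then z 0 4 else if k.1 = 2 then z 0 5 else
      if k.1 = 3 then z 1 3 else if k.1 = 4 then z 1 4 else if k.1 = 5 then z 1 5 else
      if k.1 = 6 then z 2 3 else if k.1 = 7 then z 2 4 else if k.1 = 8 then z 2 5 else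
      if k.1 = 9 then z 0 0 else if k.1 = 10 then z 1 1 else z 2 2, ?_⟩
    ext p q
    fin_cases p <;> fin_cases q <;>
      simp (config := { decide := true }) [LA, MA, eqA, eqB, eqC, eqD, eqE, eqF, eqG, eqH, eqI,
        hup 1 0 (by decide), hup 2 0 (by decide), hup 2 1 (by decide), hup 3 0 (by decide),
        hup 3 1 (by decide), hup 3 2 (by decide), hup 4 0 (by decide), hup 4 1 (by decide),
        hup 4 2 (by decide), hup 4 3 (by decide), hup 5 0 (by decide), hup 5 1 (by decide),
        hup 5 2 (by decide), hup 5 3 (by decide), hup 5 4 (by decide)]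
  · rintro _ ⟨c, rfl⟩
    constructor
    · intro a b hba
      fin_cases a <;> fin_cases b <;>
        first
          | exact absurd hba (by decide)
          | simp (config := { decide := true }) [LA, MA]
    · ext p q
      fin_cases p <;> fin_cases q <;>
        simp (config := { decide := true }) [LA, MA, NA, Matrix.mul_apply, Fin.sum_univ_six]

lemma finA : Module.finrank ℂ (commUT NA) = 12 := by
  rw [commA, LinearMap.finrank_range_of_inj LA_inj]
  simp


def NT : Matrix (Fin 6) (Fin 6) ℂ := Matrix.of fun p q =>
  if p.1 = 0 ∧ q.1 = 4 ∨ p.1 = 1 ∧ q.1 = 5 ∨ p.1 = 2 ∧ q.1 = 3 then 1 else 0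

lemma hNT : Nmat (Equiv.swap 0 4 * Equiv.swap 1 5 * Equiv.swap 2 3) = NT := by
  ext p q
  fin_cases p <;> fin_cases q <;> rfl

def MT (c : Fin 13 → ℂ) : Matrix (Fin 6) (Fin 6) ℂ :=
  Matrix.of fun p q =>
    if p.1 = 0 ∧ q.1 = 0 then c 9 else
    if p.1 = 0 ∧ q.1 = 1 then c 12 else
    if p.1 = 1 ∧ q.1 = 1 then c 10 else
    if p.1 = 2 ∧ q.1 = 2 then c 11 else
    if p.1 = 0 ∧ q.1 = 3 then c 0 else
    if p.1 = 0 ∧ q.1 = 4 then c 1 else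
    if p.1 = 0 ∧ q.1 = 5 then c 2 else
    if p.1 = 1 ∧ q.1 = 3 then c 3 else
    if p.1 = 1 ∧ q.1 = 4 then c 4 else
    if p.1 = 1 ∧ q.1 = 5 then c 5 else
    if p.1 = 2 ∧ q.1 = 3 then c 6 else
    if p.1 = 2 ∧ q.1 = 4 then c 7 else
    if p.1 = 2 ∧ q.1 = 5 then c 8 else
    if p.1 = 3 ∧ q.1 = 3 then c 11 else
    if p.1 = 4 ∧ q.1 = 4 then c 9 else
    if p.1 = 4 ∧ q.1 = 5 then c 12 else
    if p.1 = 5 ∧ q.1 = 5 then c 10 else 0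

set_option maxHeartbeats 1000000 in
def LTm : (Fin 13 → ℂ) →ₗ[ℂ] Matrix (Fin 6) (Fin 6) ℂ where
  toFun := MT
  map_add' x y := by
    ext p q
    fin_cases p <;> fin_cases q <;> simp (config := { decide := true }) [MT]
  map_smul' m x := by
    ext p q
    fin_cases p <;> fin_cases q <;> simp (config := { decide := true }) [MT]

lemma LT_inj : Function.Injective LTm := by
  intro c d h
  have hpq : ∀ p q, MT c p q = MT d p q := fun p q => congrFun (congrFun h p) q
  funext k
  fin_cases k
  · simpa (config := { decide := true }) [MT] using hpq 0 3
  · simpa (config := { decide := true }) [MT] using hpq 0 4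
  · simpa (config := { decide := true }) [MT] using hpq 0 5
  · simpa (config := { decide := true }) [MT] using hpq 1 3
  · simpa (config := { decide := true }) [MT] using hpq 1 4
  · simpa (config := { decide := true }) [MT] using hpq 1 5
  · simpa (config := { decide := true }) [MT] using hpq 2 3
  · simpa (config := { decide := true }) [MT] using hpq 2 4
  · simpa (config := { decide := true }) [MT] using hpq 2 5
  · simpa (config := { decide := true }) [MT] using hpq 0 0
  · simpa (config := { decide := true }) [MT] using hpq 1 1
  · simpa (config := { decide := true }) [MT] using hpq 2 2
  · simpa (config := { decide := true }) [MT] using hpq 0 1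

set_option maxHeartbeats 1000000 in
lemma commT : commUT NT = LinearMap.range LTm := by
  apply le_antisymm
  · rintro z ⟨hup, hcomm⟩
    have E : ∀ p q : Fin 6, (z * NT) p q = (NT * z) p q := fun p q =>
      congrFun (congrFun hcomm p) q
    have eqA : z 0 0 = z 4 4 := by
      have h := E 0 4
      simpa (config := { decide := true }) [Matrix.mul_apply, Fin.sum_univ_six, NT] using h
    have eqB : z 0 1 = z 4 5 := by
      have h := E 0 5
      simpa (config := { decide := true }) [Matrix.mul_apply, Fin.sum_univ_six, NT] using h
    have eqC : z 1 1 = z 5 5 := by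
      have h := E 1 5
      simpa (config := { decide := true }) [Matrix.mul_apply, Fin.sum_univ_six, NT] using h
    have eqD : z 2 2 = z 3 3 := by
      have h := E 2 3
      simpa (config := { decide := true }) [Matrix.mul_apply, Fin.sum_univ_six, NT] using h
    have eqE : z 0 2 = 0 := by
      have h := E 0 3
      simpa (config := { decide := true }) [Matrix.mul_apply, Fin.sum_univ_six, NT,
        hup 4 3 (by decide)] using h
    have eqF : z 1 2 = 0 := by
      have h := E 1 3
      simpa (config := { decide := true }) [Matrix.mul_apply, Fin.sum_univ_six, NT,
        hup 5 3 (by decide)] using h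
    have eqG : z 3 4 = 0 := by
      have h := E 2 4
      simpa (config := { decide := true }) [Matrix.mul_apply, Fin.sum_univ_six, NT,
        hup 2 0 (by decide)] using h.symm
    have eqH : z 3 5 = 0 := by
      have h := E 2 5
      simpa (config := { decide := true }) [Matrix.mul_apply, Fin.sum_univ_six, NT,
        hup 2 1 (by decide)] using h.symm
    refine ⟨fun k =>
      if k.1 = 0 then z 0 3 else if k.1 = 1 then z 0 4 else if k.1 = 2 then z 0 5 else
      if k.1 = 3 then z 1 3 else if k.1 = 4 then z 1 4 else if k.1 = 5 then z 1 5 else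
      if k.1 = 6 then z 2 3 else if k.1 = 7 then z 2 4 else if k.1 = 8 then z 2 5 else
      if k.1 = 9 then z 0 0 else if k.1 = 10 then z 1 1 else if k.1 = 11 then z 2 2
      else z 0 1, ?_⟩
    ext p q
    fin_cases p <;> fin_cases q <;>
      simp (config := { decide := true }) [LTm, MT, eqA, eqB, eqC, eqD, eqE, eqF, eqG, eqH,
        hup 1 0 (by decide), hup 2 0 (by decide), hup 2 1 (by decide), hup 3 0 (by decide),
        hup 3 1 (by decide), hup 3 2 (by decide), hup 4 0 (by decide), hup 4 1 (by decide),
        hup 4 2 (by decide), hup 4 3 (by decide), hup 5 0 (by decide), hup 5 1 (by decide),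
        hup 5 2 (by decide), hup 5 3 (by decide), hup 5 4 (by decide)]
  · rintro _ ⟨c, rfl⟩
    constructor
    · intro a b hba
      fin_cases a <;> fin_cases b <;>
        first
          | exact absurd hba (by decide)
          | simp (config := { decide := true }) [LTm, MT]
    · ext p q
      fin_cases p <;> fin_cases q <;>
        simp (config := { decide := true }) [LTm, MT, NT, Matrix.mul_apply, Fin.sum_univ_six]

lemma finT : Module.finrank ℂ (commUT NT) = 13 := by
  rw [commT, LinearMap.finrank_range_of_inj LT_inj]
  simp



set_option maxHeartbeats 4000000 in
/-- for `n = 6`, `σ = (1,6)(2,5)(3,4)` and `σ' = (1,2)(3,4)(5,6)`, the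
entrywise minimum of the rank matrices equals the rank matrix of the involution
`τ = (1,5)(2,6)(3,4)`; moreover the upper-triangular commutants of `N_σ` and `N_τ` have
dimensions 12 and 13 (so the intersection of the orbit closures is irreducible of
codimension 1). -/
theorem stmt19 :
    let σ : Equiv.Perm (Fin 6) := Equiv.swap 0 5 * Equiv.swap 1 4 * Equiv.swap 2 3
    let σ' : Equiv.Perm (Fin 6) := Equiv.swap 0 1 * Equiv.swap 2 3 * Equiv.swap 4 5
    let τ : Equiv.Perm (Fin 6) := Equiv.swap 0 4 * Equiv.swap 1 5 * Equiv.swap 2 3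
    IsInvol τ ∧
    (∀ i j, min (Rfun σ i j) (Rfun σ' i j) = Rfun τ i j) ∧
    Module.finrank ℂ (commUT (Nmat σ)) = 12 ∧
    Module.finrank ℂ (commUT (Nmat τ)) = 13 := by
  intro σ σ' τ
  refine ⟨?_, ?_, ?_, ?_⟩
  · show IsInvol (Equiv.swap 0 4 * Equiv.swap 1 5 * Equiv.swap 2 3)
    rw [IsInvol]
    ext a
    fin_cases a <;> rfl
  · intro i j
    by_cases h : 1 ≤ i ∧ i < j ∧ j ≤ 6
    · obtain ⟨h1, h2, h3⟩ := h
      have h4 : i ≤ 5 := by omega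
      interval_cases i <;> interval_cases j <;>
        rw [Rfun_eq σ _ _ (by omega), Rfun_eq σ' _ _ (by omega), Rfun_eq τ _ _ (by omega)] <;>
        decide
    · simp [Rfun, dif_neg h]
  · show Module.finrank ℂ
      (commUT (Nmat (Equiv.swap 0 5 * Equiv.swap 1 4 * Equiv.swap 2 3))) = 12
    rw [hNA]
    exact finA
  · show Module.finrank ℂ
      (commUT (Nmat (Equiv.swap 0 4 * Equiv.swap 1 5 * Equiv.swap 2 3))) = 13
    rw [hNT]
    exact finT
end
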